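/- arXiv:2004.13190 — 3 statements merged into one kernel-verified Lean document; each statement's English description precedes it below -/
import Mathlib

section
/- Let R be a commutative Noetherian ring of prime characteristic p > 0, let I be an ideal of R of positive height, and let s ≥ 1 be a rational number. Then I* + I_s is contained in the weak s-closure of I. -/
/-
The tight-closure part and the rational-power part land in the two summands of
`I^(s,q) = I^⌈sq⌉ + I^[q]` separately, and the weak `s`-closure is closed under addition because
`(x + y)^q = x^q + y^q`. For `v ∈ I_s` with `s = a/b`, integrality of `v^b` over `I^a` gives
`c·v^(bn) ∈ I^(an)`; writing `q = bn + r` with `r < b`, the missing `a` powers of `I` are supplied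
by a fixed `d^a`, where `d ∈ I` avoids all minimal primes by prime avoidance.
-/

open Pointwise

/-- `R°`: the set of elements of `R` not contained in any minimal prime of `R`. -/
def RCirc (R : Type*) [CommRing R] : Set R :=
  {c | ∀ P ∈ minimalPrimes R, c ∉ P}

/-- The `q`-th Frobenius power `I^[q]` of an ideal `I`, generated by `q`-th powers
of elements of `I`. -/
def frobPow {R : Type*} [CommRing R] (I : Ideal R) (q : ℕ) : Ideal R :=
  Ideal.span ((fun f => f ^ q) '' (I : Set R))

/-- The `(s,q)` mixed power `I^(s,q) = I^⌈sq⌉ + I^[q]`. -/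
noncomputable def mixedPow {R : Type*} [CommRing R] (I : Ideal R) (s : ℝ) (q : ℕ) : Ideal R :=
  I ^ ⌈s * (q : ℝ)⌉₊ + frobPow I q

/-- The weak `s`-closure of `I`: elements `x` such that there is `c ∈ R°` with
`c·x^q ∈ I^(s,q)` for all sufficiently large powers `q = p^e` of `p`. -/
def weakCl {R : Type*} [CommRing R] (p : ℕ) (I : Ideal R) (s : ℝ) : Set R :=
  {x | ∃ c ∈ RCirc R, ∃ N : ℕ, ∀ e : ℕ, N ≤ e → c * x ^ p ^ e ∈ mixedPow I s (p ^ e)}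

/-- The tight closure `I*` of `I`. -/
def tightCl {R : Type*} [CommRing R] (p : ℕ) (I : Ideal R) : Set R :=
  {x | ∃ c ∈ RCirc R, ∃ N : ℕ, ∀ e : ℕ, N ≤ e → c * x ^ p ^ e ∈ frobPow I (p ^ e)}

/-- The integral closure of `I`: elements `x` such that there is `c ∈ R°` with
`c·x^n ∈ I^n` for all sufficiently large `n`. -/
def intCl {R : Type*} [CommRing R] (I : Ideal R) : Set R :=
  {x | ∃ c ∈ RCirc R, ∃ N : ℕ, ∀ n : ℕ, N ≤ n → c * x ^ n ∈ I ^ n}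

/-- The `α`-th rational power `I_α` of `I`, for rational `α = a/b ≥ 0`:
elements `x` with `x^b` in the integral closure of `I^a`. -/
noncomputable def ratPow {R : Type*} [CommRing R] (I : Ideal R) (α : ℚ) : Set R :=
  {x | x ^ α.den ∈ intCl (I ^ α.num.toNat)}

/-- `μ(I)`: the minimal number of generators of `I`. -/
noncomputable def mu {R : Type*} [CommRing R] (I : Ideal R) : ℕ :=
  sInf {m : ℕ | ∃ s : Finset R, s.card = m ∧ Ideal.span (s : Set R) = I}

/-- An ideal has positive height if it is not contained in any minimal prime. -/
def PosHeight {R : Type*} [CommRing R] (I : Ideal R) : Prop :=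
  ∀ P ∈ minimalPrimes R, ¬ I ≤ P

section RCirc

variable {R : Type*} [CommRing R]

theorem RCirc.mul_mem {c d : R} (hc : c ∈ RCirc R) (hd : d ∈ RCirc R) : c * d ∈ RCirc R :=
  fun P hP hcd => (hP.1.1.mem_or_mem hcd).elim (hc P hP) (hd P hP)

theorem RCirc.pow_mem {c : R} (hc : c ∈ RCirc R) (n : ℕ) : c ^ n ∈ RCirc R :=
  fun P hP hcn => hc P hP (hP.1.1.mem_of_pow_mem n hcn)

theorem exists_mem_rCirc_of_posHeight (hfin : (minimalPrimes R).Finite) {I : Ideal R}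
    (hI : PosHeight I) : ∃ d ∈ I, d ∈ RCirc R := by
  by_contra! h
  have hcover : (I : Set R) ⊆ ⋃ P ∈ minimalPrimes R, ((id P : Ideal R) : Set R) := by
    intro x hx
    obtain ⟨P, hP, hxP⟩ : ∃ P ∈ minimalPrimes R, x ∈ P := by
      simpa [RCirc] using h x hx
    exact Set.mem_biUnion hP hxP
  rw [Ideal.subset_union_prime_finite (f := id) hfin ⊥ ⊥ fun P hP _ _ => hP.1.1] at hcover
  obtain ⟨P, hP, hIP⟩ := hcover
  exact hI P hP hIP

end RCirc

section WeakClosure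

variable {R : Type*} [CommRing R] {p : ℕ} {I : Ideal R} {s : ℝ}

theorem weakCl_add_mem [ExpChar R p] {x y : R} (hx : x ∈ weakCl p I s) (hy : y ∈ weakCl p I s) :
    x + y ∈ weakCl p I s := by
  obtain ⟨c, hc, N, hN⟩ := hx
  obtain ⟨c', hc', N', hN'⟩ := hy
  refine ⟨c * c', RCirc.mul_mem hc hc', max N N', fun e he => ?_⟩
  have hsplit : c * c' * (x + y) ^ p ^ e = c' * (c * x ^ p ^ e) + c * (c' * y ^ p ^ e) := by
    rw [add_pow_expChar_pow]; ring
  rw [hsplit]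
  exact add_mem (Ideal.mul_mem_left _ _ (hN e (le_of_max_le_left he)))
    (Ideal.mul_mem_left _ _ (hN' e (le_of_max_le_right he)))

theorem tightCl_subset_weakCl : tightCl p I ⊆ weakCl p I s :=
  fun _ ⟨c, hc, N, hN⟩ => ⟨c, hc, N, fun e he => Submodule.mem_sup_right (hN e he)⟩

theorem mem_weakCl_of_eventually_mem_pow_ceil (hp : 1 < p) {x : R}
    (hx : ∃ c ∈ RCirc R, ∃ N : ℕ, ∀ m : ℕ, N ≤ m → c * x ^ m ∈ I ^ ⌈s * m⌉₊) :
    x ∈ weakCl p I s := by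
  obtain ⟨c, hc, N, hN⟩ := hx
  refine ⟨c, hc, N, fun e he => ?_⟩
  have hNq : N ≤ p ^ e := he.trans (Nat.lt_pow_self hp).le
  exact Submodule.mem_sup_left (by exact_mod_cast hN _ hNq)

end WeakClosure

section RationalPower

theorem ceil_mul_le_toNat_mul_div_add_one (s : ℚ) (m : ℕ) :
    ⌈(s : ℝ) * m⌉₊ ≤ s.num.toNat * (m / s.den + 1) := by
  set a := s.num.toNat
  set b := s.den
  have hb : (0 : ℝ) < b := by exact_mod_cast s.pos
  have hsa : (s : ℝ) ≤ a / b := by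
    rw [Rat.cast_def, div_le_div_iff_of_pos_right hb]
    exact_mod_cast Int.self_le_toNat s.num
  have hm : (m : ℝ) ≤ b * (m / b + 1 : ℕ) := by
    exact_mod_cast (Nat.lt_mul_div_succ m s.pos).le
  rw [Nat.ceil_le]
  calc (s : ℝ) * m ≤ a / b * (b * (m / b + 1 : ℕ)) := by
        gcongr
    _ = (a * (m / b + 1) : ℕ) := by field_simp; push_cast; ring

variable {R : Type*} [CommRing R] {I : Ideal R}

theorem ratPow_eventually_mul_pow_mem {s : ℚ} {d x : R} (hdI : d ∈ I) (hd : d ∈ RCirc R)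
    (hx : x ∈ ratPow I s) :
    ∃ c ∈ RCirc R, ∃ N : ℕ, ∀ m : ℕ, N ≤ m → c * x ^ m ∈ I ^ ⌈(s : ℝ) * m⌉₊ := by
  obtain ⟨c, hc, N, hN⟩ := hx
  set a := s.num.toNat
  set b := s.den
  refine ⟨c * d ^ a, RCirc.mul_mem hc (RCirc.pow_mem hd a), b * N, fun m hm => ?_⟩
  set n := m / b
  have hnN : N ≤ n := (Nat.le_div_iff_mul_le s.pos).mpr (by rwa [mul_comm])
  have hbn : c * x ^ (b * n) ∈ I ^ (a * n) := by
    simpa only [← pow_mul] using hN n hnN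
  have hsplit : c * d ^ a * x ^ m = (c * x ^ (b * n) * d ^ a) * x ^ (m % b) := by
    conv_lhs => rw [← Nat.div_add_mod m b, pow_add]
    ring
  have hpad : c * d ^ a * x ^ m ∈ I ^ (a * (n + 1)) := by
    rw [hsplit, mul_add_one, pow_add]
    exact Ideal.mul_mem_right _ _ (Ideal.mul_mem_mul hbn (Ideal.pow_mem_pow hdI a))
  exact Ideal.pow_le_pow_right (ceil_mul_le_toNat_mul_div_add_one s m) hpad

end RationalPower

theorem stmt6_general {R : Type*} [CommRing R] [IsNoetherianRing R]
    (p : ℕ) (hp : p.Prime) (hcp : CharP R p)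
    (I : Ideal R) (hI : PosHeight I) (s : ℚ) :
    tightCl p I + ratPow I s ⊆ weakCl p I (s : ℝ) := by
  have : ExpChar R p := ExpChar.prime hp
  obtain ⟨d, hdI, hd⟩ :=
    exists_mem_rCirc_of_posHeight (minimalPrimes.finite_of_isNoetherianRing R) hI
  rintro _ ⟨u, hu, v, hv, rfl⟩
  exact weakCl_add_mem (tightCl_subset_weakCl hu)
    (mem_weakCl_of_eventually_mem_pow_ceil hp.one_lt (ratPow_eventually_mul_pow_mem hdI hd hv))

/-- `I* + I_s` is contained in the weak `s`-closure of `I`, for `I` of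
positive height and rational `s ≥ 1`. -/
theorem stmt6 {R : Type*} [CommRing R] [IsNoetherianRing R]
    (p : ℕ) (hp : p.Prime) (hcp : CharP R p)
    (I : Ideal R) (hI : PosHeight I) (s : ℚ) (hs : 1 ≤ s) :
    tightCl p I + ratPow I s ⊆ weakCl p I (s : ℝ) :=
  stmt6_general p hp hcp I hI s
end

section
/- Let R be a commutative Noetherian ring of prime characteristic p > 0, let I be an ideal of R, and let 1 ≤ t < s be real numbers. Then the weak s-closure of the weak t-closure of I equals the weak t-closure of I. -/
/-!
If `c y^q ∈ I^(t,q) ⊆ I^q` for all large `q`, then `y` is integral over `I`: in the Rees algebra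
the ideals generated by the `c y^q T^q` stabilise, which yields `c (y^(n+1) - u) = 0` with `u` in
`I (I, y)^n`, and since `c` avoids all minimal primes, `y^(n+1) - u` is nilpotent. Hence the weak
`t`-closure `J` of `I` satisfies `J^(D+k) ⊆ I^k` for a fixed `D`, so `J^⌈sq⌉ ⊆ I^⌈tq⌉` for large `q`
because `s > t`. Additivity of Frobenius and a common multiplier `c₀` for generators of `J` give
`c₀ J^[q] ⊆ I^(t,q)`. Thus `c₀ J^(s,q) ⊆ I^(t,q)`, and the weak `s`-closure of `J` lies in `J`.
-/

open Pointwise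

open Filter Polynomial

section IntegralOverIdeal

variable {R : Type*} [CommRing R]

/-- The condition `y ^ (n + 1) ∈ I * (I ⊔ (y)) ^ n` is equivalent to an equation of integral
dependence `y ^ (n + 1) + a₁ y ^ n + ⋯ + aₙ₊₁ = 0` with `aⱼ ∈ I ^ j`. -/
def IsIntegralOverIdeal (I : Ideal R) (y : R) : Prop :=
  ∃ n : ℕ, y ^ (n + 1) ∈ I * (I ⊔ Ideal.span {y}) ^ n

variable {I : Ideal R} {y : R}

theorem IsIntegralOverIdeal.mono {K : Ideal R} (hIK : I ≤ K) (h : IsIntegralOverIdeal I y) :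
    IsIntegralOverIdeal K y := by
  obtain ⟨n, hn⟩ := h
  exact ⟨n, Ideal.mul_mono hIK (Ideal.pow_right_mono (sup_le_sup_right hIK _) n) hn⟩

theorem sup_span_singleton_pow_succ_le (I : Ideal R) (y : R) (n : ℕ) :
    (I ⊔ Ideal.span {y}) ^ (n + 1) ≤ I * (I ⊔ Ideal.span {y}) ^ n + Ideal.span {y ^ (n + 1)} := by
  set L := I ⊔ Ideal.span {y}
  induction n with
  | zero => simp [L]
  | succ n ih =>
    rw [← Ideal.span_singleton_pow] at ih ⊢
    calc L ^ (n + 2) = L ^ (n + 1) * L := pow_succ _ _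
      _ ≤ (I * L ^ n + Ideal.span {y} ^ (n + 1)) * L := Ideal.mul_mono_left ih
      _ ≤ I * L ^ (n + 1) + Ideal.span {y} ^ (n + 2) := by
        rw [add_mul, mul_assoc, ← pow_succ, Submodule.add_eq_sup, Submodule.add_eq_sup]
        refine sup_le le_sup_left ?_
        rw [Ideal.mul_sup, ← pow_succ]
        refine sup_le (le_sup_of_le_left ?_) le_sup_right
        rw [mul_comm]
        exact Ideal.mul_mono_right (Ideal.pow_right_mono le_sup_right _)

theorem IsIntegralOverIdeal.exists_pow_add_le (h : IsIntegralOverIdeal I y) :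
    ∃ n, ∀ k, (I ⊔ Ideal.span {y}) ^ (n + k) ≤ I ^ k := by
  obtain ⟨n, hn⟩ := h
  set L := I ⊔ Ideal.span {y}
  have hstep : L ^ (n + 1) ≤ I * L ^ n := by
    refine (sup_span_singleton_pow_succ_le I y n).trans ?_
    rw [Submodule.add_eq_sup, sup_le_iff, Ideal.span_singleton_le_iff_mem]
    exact ⟨le_rfl, hn⟩
  have hpow : ∀ k, L ^ (n + k) ≤ I ^ k * L ^ n := by
    intro k
    induction k with
    | zero => simp
    | succ k ih =>
      calc L ^ (n + (k + 1)) = L ^ (n + k) * L := by rw [← add_assoc, pow_succ]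
        _ ≤ I ^ k * L ^ n * L := Ideal.mul_mono_left ih
        _ ≤ I ^ k * (I * L ^ n) := by rw [mul_assoc, ← pow_succ]; exact Ideal.mul_mono_right hstep
        _ = I ^ (k + 1) * L ^ n := by rw [← mul_assoc, ← pow_succ]
  exact ⟨n, fun k => (hpow k).trans Ideal.mul_le_left⟩

theorem exists_sup_span_pow_add_le_pow (T : Finset R) (h : ∀ y ∈ T, IsIntegralOverIdeal I y) :
    ∃ D, ∀ k, (I ⊔ Ideal.span (T : Set R)) ^ (D + k) ≤ I ^ k := by
  classical
  induction T using Finset.induction_on with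
  | empty => exact ⟨0, fun k => by simp⟩
  | insert y T _ ih =>
    obtain ⟨D, hD⟩ := ih fun z hz => h z (Finset.mem_insert_of_mem hz)
    set K := I ⊔ Ideal.span (T : Set R)
    obtain ⟨n, hn⟩ := ((h y (Finset.mem_insert_self y T)).mono le_sup_left :
      IsIntegralOverIdeal K y).exists_pow_add_le
    have hK : I ⊔ Ideal.span (↑(insert y T) : Set R) = K ⊔ Ideal.span {y} := by
      rw [Finset.coe_insert, Ideal.span_insert, sup_comm (Ideal.span {y}), ← sup_assoc]
    refine ⟨n + D, fun k => ?_⟩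
    rw [hK, add_assoc]
    exact (hn (D + k)).trans (hD k)

theorem pow_succ_mul_span_pow_le (I : Ideal R) (y : R) (i j : ℕ) :
    I ^ (i + 1) * Ideal.span {y ^ j} ≤ I * (I ⊔ Ideal.span {y}) ^ (i + j) := by
  rw [pow_succ', mul_assoc, pow_add, ← Ideal.span_singleton_pow]
  exact Ideal.mul_mono_right (Ideal.mul_mono (Ideal.pow_right_mono le_sup_left _)
    (Ideal.pow_right_mono le_sup_right _))

theorem isIntegralOverIdeal_of_isNilpotent_sub {n : ℕ} {u : R}
    (hu : u ∈ I * (I ⊔ Ideal.span {y}) ^ n) (h : IsNilpotent (y ^ (n + 1) - u)) :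
    IsIntegralOverIdeal I y := by
  obtain ⟨m, hm⟩ := h
  set L := I ⊔ Ideal.span {y}
  set a := y ^ (n + 1)
  set z := a - u
  have ha : a ∈ L ^ (n + 1) :=
    Ideal.pow_mem_pow (Ideal.mem_sup_right (Ideal.mem_span_singleton_self y)) _
  have hz : z ∈ L ^ (n + 1) := by
    refine Ideal.sub_mem _ ha ?_
    rw [pow_succ']
    exact Ideal.mul_mono_left le_sup_left hu
  -- `a ^ (m + 1) = a ^ (m + 1) - z ^ (m + 1)` is `a - z = u` times a geometric sum in
  -- `L ^ ((n + 1) * m)`.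
  have hgeom : ∑ i ∈ Finset.range (m + 1), a ^ i * z ^ (m - i) ∈ L ^ ((n + 1) * m) := by
    refine Ideal.sum_mem _ fun i hi => ?_
    have hi : i + (m - i) = m := by have := Finset.mem_range.1 hi; omega
    rw [← hi, mul_add, pow_add, pow_mul, pow_mul, Nat.add_sub_cancel_left]
    exact Ideal.mul_mem_mul (Ideal.pow_mem_pow ha i) (Ideal.pow_mem_pow hz _)
  refine ⟨(n + 1) * m + n, ?_⟩
  have hrel : a ^ (m + 1) = (∑ i ∈ Finset.range (m + 1), a ^ i * z ^ (m - i)) * u := by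
    have := geom_sum₂_mul a z (m + 1)
    rw [pow_succ z m, hm, zero_mul, sub_zero, sub_sub_cancel] at this
    exact this.symm
  have hexp : (n + 1) * m + n + 1 = (n + 1) * (m + 1) := by ring
  rw [hexp, pow_mul, hrel, pow_add, mul_left_comm]
  exact Ideal.mul_mem_mul hgeom hu

end IntegralOverIdeal

section RCirc

variable {R : Type*} [CommRing R]

theorem one_mem_RCirc : (1 : R) ∈ RCirc R :=
  fun P hP h => hP.1.1.ne_top ((Ideal.eq_top_iff_one P).2 h)

theorem mul_mem_RCirc {a b : R} (ha : a ∈ RCirc R) (hb : b ∈ RCirc R) : a * b ∈ RCirc R :=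
  fun P hP hab => (hP.1.1.mem_or_mem hab).elim (ha P hP) (hb P hP)

theorem isNilpotent_of_mem_RCirc_of_mul_eq_zero {c z : R} (hc : c ∈ RCirc R) (h : c * z = 0) :
    IsNilpotent z := by
  rw [← mem_nilradical, nilradical, ← Ideal.sInf_minimalPrimes, Submodule.mem_sInf]
  intro P hP
  have hP' : P ∈ minimalPrimes R := hP
  exact (hP.1.1.mem_or_mem (h ▸ P.zero_mem)).resolve_left (hc P hP')

end RCirc

section Rees

variable {R : Type*} [CommRing R]

def reesCoeffIdeal (I : Ideal R) (F : ℕ → Ideal R) (hF : ∀ i j, I ^ i * F j ≤ F (i + j)) :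
    Ideal (reesAlgebra I) where
  carrier := {a | ∀ k, (a : R[X]).coeff k ∈ F k}
  add_mem' ha hb k := by simpa using add_mem (ha k) (hb k)
  zero_mem' k := by simp
  smul_mem' r a ha k := by
    rw [smul_eq_mul, Subalgebra.coe_mul, coeff_mul]
    refine Ideal.sum_mem _ fun ij hij => ?_
    rw [← Finset.HasAntidiagonal.mem_antidiagonal.1 hij]
    exact hF _ _ (Ideal.mul_mem_mul ((mem_reesAlgebra_iff I _).1 r.2 ij.1) (ha ij.2))

theorem exists_mul_pow_succ_eq_mul [IsNoetherianRing R] {I : Ideal R} {c y : R}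
    (h : ∃ᶠ m in atTop, c * y ^ m ∈ I ^ m) :
    ∃ n, ∃ u ∈ I * (I ⊔ Ideal.span {y}) ^ n, c * y ^ (n + 1) = c * u := by
  -- Once the ideals generated by the `c y^q T^q`, `q ≤ k`, stabilise at `k = n₀`, the `m`-th
  -- coefficient of `c y^m T^m` exhibits `c y^m ∈ c · ∑_{q ≤ n₀} I^(m-q) y^q`.
  let gen : ℕ → Set (reesAlgebra I) := fun k =>
    {a | ∃ q ≤ k, c * y ^ q ∈ I ^ q ∧ (a : R[X]) = monomial q (c * y ^ q)}
  let chain : ℕ →o Ideal (reesAlgebra I) :=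
    ⟨fun k => Ideal.span (gen k), fun k l hkl =>
      Ideal.span_mono fun _ ⟨q, hq, hmem, ha⟩ => ⟨q, hq.trans hkl, hmem, ha⟩⟩
  obtain ⟨n₀, hn₀⟩ := monotone_stabilizes_iff_noetherian.2 inferInstance chain
  obtain ⟨m, hm, hmem⟩ := frequently_atTop.1 h (n₀ + 1)
  let F : ℕ → Ideal R := fun k =>
    Ideal.span {c} * ∑ q ∈ Finset.range (n₀ + 1), I ^ (k - q) * Ideal.span {y ^ q}
  have hF : ∀ i j, I ^ i * F j ≤ F (i + j) := by
    intro i j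
    rw [mul_left_comm, Finset.mul_sum]
    refine Ideal.mul_mono_right (Finset.sum_le_sum fun q _ => ?_)
    rw [← mul_assoc, ← pow_add]
    exact Ideal.mul_mono_left (Ideal.pow_le_pow_right (by omega))
  have hgen : chain n₀ ≤ reesCoeffIdeal I F hF := by
    refine Ideal.span_le.2 fun a ⟨q, hq, _, ha⟩ k => ?_
    rw [ha, coeff_monomial]
    split_ifs with hqk
    · subst hqk
      refine Ideal.mul_mem_mul (Ideal.mem_span_singleton_self c) ?_
      refine Finset.single_le_sum (f := fun q' => I ^ (q - q') * Ideal.span {y ^ q'})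
        (fun _ _ => bot_le) (Finset.mem_range.2 (Nat.lt_succ_of_le hq)) ?_
      simp
    · exact zero_mem _
  let a : reesAlgebra I := ⟨monomial m (c * y ^ m), reesAlgebra.monomial_mem.2 hmem⟩
  have ha : a ∈ chain n₀ := by
    rw [hn₀ m (by omega)]
    exact Ideal.subset_span ⟨m, le_rfl, hmem, rfl⟩
  have hcoeff : c * y ^ m ∈ F m := by simpa [a] using hgen ha m
  obtain ⟨u, hu, hcu⟩ := Ideal.mem_span_singleton_mul.1 hcoeff
  refine ⟨m - 1, u, ?_, ?_⟩
  · rw [Ideal.sum_eq_sup] at hu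
    refine SetLike.le_def.1 (Finset.sup_le fun q hq => ?_) hu
    have hq : q < m := by have := Finset.mem_range.1 hq; omega
    have := pow_succ_mul_span_pow_le I y (m - 1 - q) q
    rwa [show m - 1 - q + 1 = m - q by omega, show m - 1 - q + q = m - 1 by omega] at this
  · rw [show m - 1 + 1 = m by omega, hcu]

theorem isIntegralOverIdeal_of_frequently_mul_pow_mem [IsNoetherianRing R] {I : Ideal R}
    {c y : R} (hc : c ∈ RCirc R) (h : ∃ᶠ m in atTop, c * y ^ m ∈ I ^ m) :
    IsIntegralOverIdeal I y := by
  obtain ⟨n, u, hu, hcu⟩ := exists_mul_pow_succ_eq_mul h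
  exact isIntegralOverIdeal_of_isNilpotent_sub hu
    (isNilpotent_of_mem_RCirc_of_mul_eq_zero hc (by rw [mul_sub, hcu, sub_self]))

end Rees

section WeakClosure

variable {R : Type*} [CommRing R] {p : ℕ} {I J : Ideal R} {s t : ℝ}

theorem frobPow_eq_map [ExpChar R p] (I : Ideal R) (e : ℕ) :
    frobPow I (p ^ e) = I.map (iterateFrobenius R p e) :=
  rfl

theorem span_singleton_mul_frobPow_span_le [ExpChar R p] {S : Set R} {c : R} {M : Ideal R}
    {e : ℕ} (h : ∀ g ∈ S, c * g ^ p ^ e ∈ M) :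
    Ideal.span {c} * frobPow (Ideal.span S) (p ^ e) ≤ M := by
  rw [frobPow_eq_map, Ideal.map_span, Ideal.span_mul_span', Ideal.span_le]
  rintro _ ⟨_, rfl, _, ⟨g, hg, rfl⟩, rfl⟩
  simpa [iterateFrobenius_def] using h g hg

theorem frobPow_le_mixedPow (I : Ideal R) (s : ℝ) (q : ℕ) : frobPow I q ≤ mixedPow I s q :=
  le_sup_right

theorem mixedPow_le_pow (ht : 1 ≤ t) (q : ℕ) : mixedPow I t q ≤ I ^ q := by
  refine sup_le (Ideal.pow_le_pow_right ?_) ?_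
  · exact_mod_cast (le_mul_of_one_le_left q.cast_nonneg ht).trans (Nat.le_ceil _)
  · rw [frobPow, Ideal.span_le]
    rintro _ ⟨f, hf, rfl⟩
    exact Ideal.pow_mem_pow hf q

theorem span_singleton_mul_mixedPow_le {c : R} {q D : ℕ}
    (hD : J ^ (D + ⌈t * q⌉₊) ≤ I ^ ⌈t * q⌉₊) (hq : ⌈t * q⌉₊ + D ≤ ⌈s * q⌉₊)
    (hc : Ideal.span {c} * frobPow J q ≤ mixedPow I t q) :
    Ideal.span {c} * mixedPow J s q ≤ mixedPow I t q := by
  rw [mixedPow, Submodule.add_eq_sup, Ideal.mul_sup]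
  refine sup_le ?_ hc
  calc Ideal.span {c} * J ^ ⌈s * q⌉₊ ≤ J ^ (D + ⌈t * q⌉₊) :=
        Ideal.mul_le_right.trans (Ideal.pow_le_pow_right (by omega))
    _ ≤ mixedPow I t q := hD.trans le_sup_left

theorem mem_weakCl_iff {x : R} :
    x ∈ weakCl p I s ↔ ∃ c ∈ RCirc R, ∀ᶠ e in atTop, c * x ^ p ^ e ∈ mixedPow I s (p ^ e) := by
  simp only [weakCl, eventually_atTop]
  rfl

theorem subset_weakCl (p : ℕ) (I : Ideal R) (s : ℝ) : (I : Set R) ⊆ weakCl p I s :=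
  fun x hx => ⟨1, one_mem_RCirc, 0, fun e _ => by
    rw [one_mul]
    exact frobPow_le_mixedPow I s _ (Ideal.subset_span ⟨x, hx, rfl⟩)⟩

theorem weakCl_subset_weakCl_of_span_mul_le {c : R} (hc : c ∈ RCirc R)
    (h : ∀ᶠ e in atTop, Ideal.span {c} * mixedPow J s (p ^ e) ≤ mixedPow I t (p ^ e)) :
    weakCl p J s ⊆ weakCl p I t := by
  intro x hx
  obtain ⟨c', hc', hx⟩ := mem_weakCl_iff.1 hx
  refine mem_weakCl_iff.2 ⟨c * c', mul_mem_RCirc hc hc', ?_⟩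
  filter_upwards [h, hx] with e he hxe
  rw [mul_assoc]
  exact he (Ideal.mul_mem_mul (Ideal.mem_span_singleton_self c) hxe)

theorem exists_mem_RCirc_forall_mul_pow_mem (T : Finset R) (hT : ∀ y ∈ T, y ∈ weakCl p I t) :
    ∃ c ∈ RCirc R, ∀ᶠ e in atTop, ∀ y ∈ T, c * y ^ p ^ e ∈ mixedPow I t (p ^ e) := by
  classical
  induction T using Finset.induction_on with
  | empty => exact ⟨1, one_mem_RCirc, by simp⟩
  | insert y T _ ih =>
    obtain ⟨c₁, hc₁, h₁⟩ := ih fun z hz => hT z (Finset.mem_insert_of_mem hz)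
    obtain ⟨c₂, hc₂, h₂⟩ := mem_weakCl_iff.1 (hT y (Finset.mem_insert_self y T))
    refine ⟨c₁ * c₂, mul_mem_RCirc hc₁ hc₂, ?_⟩
    filter_upwards [h₁, h₂] with e h₁ h₂
    rintro z hz
    rcases Finset.mem_insert.1 hz with rfl | hz
    · rw [mul_assoc]
      exact Ideal.mul_mem_left _ _ h₂
    · rw [mul_right_comm]
      exact Ideal.mul_mem_right _ _ (h₁ z hz)

theorem isIntegralOverIdeal_of_mem_weakCl [IsNoetherianRing R] (hp : 1 < p) (ht : 1 ≤ t)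
    {y : R} (hy : y ∈ weakCl p I t) : IsIntegralOverIdeal I y := by
  obtain ⟨c, hc, h⟩ := mem_weakCl_iff.1 hy
  refine isIntegralOverIdeal_of_frequently_mul_pow_mem hc ?_
  exact (tendsto_pow_atTop_atTop_of_one_lt hp).frequently
    (h.mono fun e he => mixedPow_le_pow ht _ he).frequently

end WeakClosure

theorem eventually_ceil_add_le_ceil {t s : ℝ} (ht : 0 ≤ t) (hts : t < s) (D : ℕ) :
    ∀ᶠ q : ℕ in atTop, ⌈t * q⌉₊ + D ≤ ⌈s * q⌉₊ := by
  filter_upwards [tendsto_natCast_atTop_atTop.eventually_ge_atTop ((D + 1) / (s - t))] with q hq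
  have hD : (D : ℝ) + 1 ≤ (s - t) * q := by rwa [div_le_iff₀' (sub_pos.2 hts)] at hq
  have htq : (⌈t * q⌉₊ : ℝ) < t * q + 1 := Nat.ceil_lt_add_one (by positivity)
  refine (Nat.lt_ceil.2 ?_).le
  push_cast
  linarith

/-- for `1 ≤ t < s`, the weak `s`-closure of the weak `t`-closure of `I`
equals the weak `t`-closure of `I` (the weak `t`-closure being realized as an ideal `J`). -/
theorem stmt12 {R : Type*} [CommRing R] [IsNoetherianRing R]
    (p : ℕ) (hp : p.Prime) (hcp : CharP R p)
    (I : Ideal R) (t s : ℝ) (ht : 1 ≤ t) (hts : t < s)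
    (J : Ideal R) (hJ : (J : Set R) = weakCl p I t) :
    weakCl p J s = (J : Set R) := by
  have : ExpChar R p := ExpChar.prime hp
  have hIJ : I ≤ J := fun x hx => by
    rw [← SetLike.mem_coe, hJ]
    exact subset_weakCl p I t hx
  refine Set.Subset.antisymm ?_ (subset_weakCl p J s)
  obtain ⟨T, hT⟩ := IsNoetherian.noetherian J
  have hTI : ∀ y ∈ T, y ∈ weakCl p I t := fun y hy => hJ ▸ hT ▸ Ideal.subset_span hy
  obtain ⟨c, hc, hcT⟩ := exists_mem_RCirc_forall_mul_pow_mem T hTI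
  obtain ⟨D, hD⟩ := exists_sup_span_pow_add_le_pow T fun y hy =>
    isIntegralOverIdeal_of_mem_weakCl hp.one_lt ht (hTI y hy)
  rw [show Ideal.span (T : Set R) = J from hT, sup_eq_right.2 hIJ] at hD
  rw [hJ]
  refine weakCl_subset_weakCl_of_span_mul_le hc ?_
  filter_upwards [hcT, (tendsto_pow_atTop_atTop_of_one_lt hp.one_lt).eventually
    (eventually_ceil_add_le_ceil (by linarith) hts D)] with e hce hle
  refine span_singleton_mul_mixedPow_le (hD _) hle ?_
  rw [← hT]
  exact span_singleton_mul_frobPow_span_le hce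
end

section
/- Let R be a commutative Noetherian ring of prime characteristic p > 0, let 1 ≤ t < s be real numbers, let I be an ideal of R, and let r be a natural number with r ≥ (μ(I) − 1)(s − t)/(t(s − 1)). Then for every n ∈ ℕ, the weak t-closure of I^{n+r} is contained in the weak s-closure of I^n. -/
open Pointwise

/-!
Fix generators `G` of `I` with `|G| = μ(I)` and a large `q`. A monomial of degree `D` in `G` with
`D ≥ (n - 1)q + μ(q - 1) + 1` has, by pigeonhole, exponents whose quotients by `q` sum to at least
`n`, so it lies in `(I^n)^[q]`. Hence `I^((n + r)⌈tq⌉)`, the power part of `(I^(n+r))^(t,q)`, lies in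
`(I^n)^(s,q)` as soon as either `n⌈sq⌉ ≤ (n + r)⌈tq⌉` or that degree bound holds, and the condition
on `r` guarantees that one of the two holds for all large `q`.
-/

open Filter

section Monomials

variable {M : Type*} [CommMonoid M] [DecidableEq M]

theorem Finset.exists_sum_eq_prod_pow_eq_of_mem_pow {G : Finset M} {D : ℕ} {x : M}
    (hx : x ∈ (G : Set M) ^ D) : ∃ c : M → ℕ, ∑ g ∈ G, c g = D ∧ ∏ g ∈ G, g ^ c g = x := by
  obtain ⟨f, rfl⟩ := Set.mem_pow.mp hx
  set m : Multiset M := ↑(List.ofFn fun i ↦ (f i : M))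
  have hmG : ∀ g ∈ m, g ∈ G := by
    simp only [m, Multiset.mem_coe, List.mem_ofFn]
    rintro _ ⟨i, rfl⟩
    exact (f i).2
  refine ⟨m.count, ?_, ?_⟩
  · rw [Multiset.sum_count_eq_card hmG]
    simp [m]
  · rw [← Finset.prod_multiset_count_of_subset m G fun g hg ↦ hmG g (Multiset.mem_toFinset.mp hg)]
    rfl

end Monomials

theorem Finset.sum_le_mul_sum_div_add {ι : Type*} (G : Finset ι) (c : ι → ℕ) {q : ℕ} (hq : 0 < q) :
    ∑ g ∈ G, c g ≤ q * ∑ g ∈ G, c g / q + G.card * (q - 1) := by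
  calc ∑ g ∈ G, c g = ∑ g ∈ G, (q * (c g / q) + c g % q) := by simp only [Nat.div_add_mod]
    _ ≤ ∑ g ∈ G, (q * (c g / q) + (q - 1)) := by
        gcongr with g; exact Nat.le_sub_one_of_lt (Nat.mod_lt _ hq)
    _ = q * ∑ g ∈ G, c g / q + G.card * (q - 1) := by
        rw [Finset.sum_add_distrib, Finset.mul_sum, Finset.sum_const, smul_eq_mul]

section Ideals

variable {R : Type*} [CommRing R]

theorem frobPow_mono {I J : Ideal R} (h : I ≤ J) (q : ℕ) : frobPow I q ≤ frobPow J q :=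
  Ideal.span_mono (Set.image_mono h)

theorem pow_mem_frobPow {I : Ideal R} {x : R} (hx : x ∈ I) (q : ℕ) : x ^ q ∈ frobPow I q :=
  Ideal.subset_span ⟨x, hx, rfl⟩

theorem Ideal.prod_pow_mem_pow_sum {ι : Type*} (I : Ideal R) (G : Finset ι) (f : ι → R) (e : ι → ℕ)
    (h : ∀ g ∈ G, f g ∈ I) : ∏ g ∈ G, f g ^ e g ∈ I ^ ∑ g ∈ G, e g := by
  rw [← Finset.prod_pow_eq_pow_sum]
  exact Ideal.prod_mem_prod fun g hg ↦ Ideal.pow_mem_pow (h g hg) _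

theorem prod_pow_mem_frobPow_pow {I : Ideal R} {G : Finset R} (hG : ∀ g ∈ G, g ∈ I) {c : R → ℕ}
    {n q : ℕ} (hn : n ≤ ∑ g ∈ G, c g / q) : ∏ g ∈ G, g ^ c g ∈ frobPow (I ^ n) q := by
  have hsplit : ∏ g ∈ G, g ^ c g = (∏ g ∈ G, g ^ (c g / q)) ^ q * ∏ g ∈ G, g ^ (c g % q) := by
    rw [← Finset.prod_pow, ← Finset.prod_mul_distrib]
    refine Finset.prod_congr rfl fun g _ ↦ ?_
    rw [← pow_mul, ← pow_add, Nat.div_add_mod']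
  rw [hsplit]
  exact Ideal.mul_mem_right _ _
    (pow_mem_frobPow (Ideal.pow_le_pow_right hn (Ideal.prod_pow_mem_pow_sum I G id _ hG)) q)

theorem pow_le_frobPow_pow {I : Ideal R} {G : Finset R} (hspan : Ideal.span (G : Set R) = I)
    {n q D : ℕ} (hq : 0 < q) (hD : (n - 1) * q + G.card * (q - 1) + 1 ≤ D) :
    I ^ D ≤ frobPow (I ^ n) q := by
  classical
  have hpow : I ^ D = Ideal.span ((G : Set R) ^ D) := hspan ▸ Submodule.span_pow _ D
  rw [hpow, Ideal.span_le]
  intro x hx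
  obtain ⟨c, hsum, rfl⟩ := Finset.exists_sum_eq_prod_pow_eq_of_mem_pow hx
  refine prod_pow_mem_frobPow_pow (fun g hg ↦ hspan ▸ Ideal.subset_span hg) ?_
  have hle := G.sum_le_mul_sum_div_add c hq
  by_contra! hlt
  have : q * ∑ g ∈ G, c g / q ≤ (n - 1) * q := by
    rw [mul_comm]; exact Nat.mul_le_mul_right q (by omega)
  omega

theorem pow_le_mixedPow_pow {I : Ideal R} {G : Finset R} (hspan : Ideal.span (G : Set R) = I)
    {s : ℝ} {n q D : ℕ} (hq : 0 < q)
    (hD : n * ⌈s * q⌉₊ ≤ D ∨ (n - 1) * q + G.card * (q - 1) + 1 ≤ D) :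
    I ^ D ≤ mixedPow (I ^ n) s q := by
  rcases hD with hD | hD
  · exact le_sup_of_le_left (by rw [← pow_mul]; exact Ideal.pow_le_pow_right hD)
  · exact le_sup_of_le_right (pow_le_frobPow_pow hspan hq hD)

theorem mixedPow_pow_add_le {I : Ideal R} {G : Finset R} (hspan : Ideal.span (G : Set R) = I)
    {t s : ℝ} {n r q : ℕ} (hq : 0 < q)
    (h : n * ⌈s * q⌉₊ ≤ (n + r) * ⌈t * q⌉₊ ∨
      (n - 1) * q + G.card * (q - 1) + 1 ≤ (n + r) * ⌈t * q⌉₊) :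
    mixedPow (I ^ (n + r)) t q ≤ mixedPow (I ^ n) s q :=
  sup_le (by rw [← pow_mul]; exact pow_le_mixedPow_pow hspan hq h)
    (le_sup_of_le_right (frobPow_mono (Ideal.pow_le_pow_right (n.le_add_right r)) q))

end Ideals

theorem exponent_dichotomy {t s M r n : ℝ} (ht : 1 ≤ t) (hts : t < s)
    (hM : M * (s - t) ≤ r * (t * (s - 1))) : n + M ≤ (n + r) * t ∨ n * s < (n + r) * t := by
  refine or_iff_not_imp_left.mpr fun hA ↦ ?_
  push Not at hA
  by_contra! hδ
  -- With A := n + M - (n + r)t > 0 and B := rt(s - 1) - M(s - t) ≥ 0, one has the identity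
  -- ((n + r)t - ns)(s - 1)(t - 1) = B(t - 1) + (s - t)(A(s - 1) + B).
  nlinarith [mul_pos (sub_pos.mpr hts) (mul_pos (sub_pos.mpr hA) (by linarith : (0 : ℝ) < s - 1)),
    mul_nonneg (sub_nonneg.mpr hM) (sub_nonneg.mpr ht),
    mul_nonneg (sub_nonneg.mpr hM) (sub_pos.mpr hts).le,
    mul_nonpos_of_nonpos_of_nonneg (sub_nonpos.mpr hδ)
      (mul_nonneg (by linarith : (0 : ℝ) ≤ s - 1) (sub_nonneg.mpr ht))]

theorem Nat.sub_one_mul_add_mul_sub_one_add_one_le {n μ q : ℕ} (hn : 0 < n) (hq : 0 < q) :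
    (n - 1) * q + μ * (q - 1) + 1 ≤ (n + (μ - 1)) * q := by
  obtain ⟨n, rfl⟩ := Nat.exists_eq_add_one_of_ne_zero hn.ne'
  obtain ⟨q, rfl⟩ := Nat.exists_eq_add_one_of_ne_zero hq.ne'
  rcases μ with _ | μ
  · simp [add_mul]
  · simp only [add_tsub_cancel_right]
    nlinarith

theorem eventually_exponent_bound {t s : ℝ} (ht : 1 ≤ t) (hts : t < s) (μ n r : ℕ)
    (hr : ((μ : ℝ) - 1) * (s - t) / (t * (s - 1)) ≤ r) :
    ∀ᶠ q : ℕ in atTop, n * ⌈s * q⌉₊ ≤ (n + r) * ⌈t * q⌉₊ ∨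
      (n - 1) * q + μ * (q - 1) + 1 ≤ (n + r) * ⌈t * q⌉₊ := by
  -- `μ - 1` truncates to `0` at `μ = 0`, which is still a valid bound for the degree estimate.
  have hM : ((μ - 1 : ℕ) : ℝ) * (s - t) ≤ r * (t * (s - 1)) := by
    rcases μ with _ | μ
    · simp only [zero_tsub, CharP.cast_eq_zero, zero_mul]
      have : 1 < s := ht.trans_lt hts
      positivity
    · simpa using (div_le_iff₀ (by nlinarith)).mp hr
  obtain rfl | hn := n.eq_zero_or_pos
  · exact Eventually.of_forall fun q ↦ Or.inl (by simp)
  rcases exponent_dichotomy (n := n) ht hts hM with h | h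
  · filter_upwards [eventually_gt_atTop 0] with q hq
    refine Or.inr ((Nat.sub_one_mul_add_mul_sub_one_add_one_le hn hq).trans ?_)
    have : ((n + (μ - 1) : ℕ) : ℝ) * q ≤ (n + r) * ⌈t * q⌉₊ := by
      calc ((n + (μ - 1) : ℕ) : ℝ) * q ≤ (n + r) * t * q := by push_cast; gcongr
        _ ≤ (n + r) * ⌈t * q⌉₊ := by rw [mul_assoc]; gcongr; exact Nat.le_ceil _
    exact_mod_cast this
  · filter_upwards [eventually_ge_atTop ⌈n / ((n + r) * t - n * s)⌉₊] with q hq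
    left
    have hδ : (n : ℝ) ≤ ((n + r) * t - n * s) * q :=
      (div_le_iff₀' (sub_pos.mpr h)).mp (Nat.ceil_le.mp hq)
    have : (n : ℝ) * ⌈s * q⌉₊ ≤ (n + r) * ⌈t * q⌉₊ := by
      calc (n : ℝ) * ⌈s * q⌉₊ ≤ n * (s * q + 1) := by
            have : 0 < s := by linarith
            gcongr; exact (Nat.ceil_lt_add_one (by positivity)).le
        _ ≤ (n + r) * (t * q) := by linarith
        _ ≤ (n + r) * ⌈t * q⌉₊ := by gcongr; exact Nat.le_ceil _
    exact_mod_cast this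

section Closures

variable {R : Type*} [CommRing R]

theorem weakCl_subset_weakCl {p : ℕ} (hp : 1 < p) {I J : Ideal R} {t s : ℝ}
    (h : ∀ᶠ q in atTop, mixedPow I t q ≤ mixedPow J s q) : weakCl p I t ⊆ weakCl p J s := by
  rintro x ⟨c, hc, N, hN⟩
  obtain ⟨E, hE⟩ := eventually_atTop.mp ((tendsto_pow_atTop_atTop_of_one_lt hp).eventually h)
  exact ⟨c, hc, max N E, fun e he ↦ hE e (le_of_max_le_right he) (hN e (le_of_max_le_left he))⟩

theorem exists_finset_card_eq_mu [IsNoetherianRing R] (I : Ideal R) :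
    ∃ G : Finset R, G.card = mu I ∧ Ideal.span (G : Set R) = I :=
  let ⟨G, hG⟩ := IsNoetherian.noetherian I
  Nat.sInf_mem (s := {m | ∃ G : Finset R, G.card = m ∧ Ideal.span (G : Set R) = I})
    ⟨G.card, G, rfl, hG⟩

end Closures

theorem stmt18_general {R : Type*} [CommRing R] [IsNoetherianRing R]
    (p : ℕ) (hp : p.Prime)
    (t s : ℝ) (ht : 1 ≤ t) (hts : t < s) (I : Ideal R) (r : ℕ)
    (hr : ((mu I : ℝ) - 1) * (s - t) / (t * (s - 1)) ≤ (r : ℝ)) :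
    ∀ n : ℕ, weakCl p (I ^ (n + r)) t ⊆ weakCl p (I ^ n) s := by
  intro n
  obtain ⟨G, hcard, hspan⟩ := exists_finset_card_eq_mu I
  refine weakCl_subset_weakCl hp.one_lt ?_
  filter_upwards [eventually_exponent_bound ht hts (mu I) n r hr, eventually_gt_atTop 0]
    with q hq hq0
  exact mixedPow_pow_add_le hspan hq0 (hcard ▸ hq)

/-- Briançon–Skoda for `s`-closures: for `1 ≤ t < s` and
`r ≥ (μ(I) − 1)(s − t)/(t(s − 1))`, the weak `t`-closure of `I^{n+r}` is contained in the
weak `s`-closure of `I^n` for every `n`. -/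
theorem stmt18 {R : Type*} [CommRing R] [IsNoetherianRing R]
    (p : ℕ) (hp : p.Prime) (hcp : CharP R p)
    (t s : ℝ) (ht : 1 ≤ t) (hts : t < s) (I : Ideal R) (r : ℕ)
    (hr : ((mu I : ℝ) - 1) * (s - t) / (t * (s - 1)) ≤ (r : ℝ)) :
    ∀ n : ℕ, weakCl p (I ^ (n + r)) t ⊆ weakCl p (I ^ n) s :=
  stmt18_general p hp t s ht hts I r hr
end
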